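/- arXiv:1805.04156 — 2 statements merged into one kernel-verified Lean document; each statement's English description precedes it below -/
import Mathlib

section
/- Let n ≥ 1, let A ⊆ C with C \ A nonempty, and set m_q = max{ m_c : c ∈ C \ A }. Then every completion T of P has at least one plurality winner belonging to A if and only if there is NO injective function f from the set { i ∈ {1,…,n} : Pᵢ is a necessary supporter of A } into A × {1,…,m_q − 1} such that for every necessary supporter index i the first component of f(i) belongs to max(Pᵢ). -/
/-- `c` is a maximal element of the partial order (relation) `Q` (where `Q a b` means
`b` is weakly preferred to `a`): no candidate `d ≠ c` is strictly above `c`. -/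
def MaxIn {C : Type*} (Q : C → C → Prop) (c : C) : Prop := ∀ d, Q c d → d = c

/-- `T` is a completion of the partial voting profile `P`: each `T i` is a linear
order extending the partial order `P i`.  (`T i a b` means `b` is weakly preferred
to `a` by voter `i`.) -/
def IsCompletion {C : Type*} {n : ℕ} (P T : Fin n → C → C → Prop) : Prop :=
  (∀ i, IsLinearOrder C (T i)) ∧ ∀ i a b, P i a b → T i a b

/-- The plurality score of `c`: the number of voters whose greatest (most preferred)
element is `c`. -/
noncomputable def pluralityScore {C : Type*} {n : ℕ} (T : Fin n → C → C → Prop) (c : C) : ℕ :=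
  Nat.card {i : Fin n // ∀ d, T i d c}

/-- `m_c`: the number of indices `i` such that `c` is maximal in `P i`. -/
noncomputable def maxCount {C : Type*} {n : ℕ} (P : Fin n → C → C → Prop) (c : C) : ℕ :=
  Nat.card {i : Fin n // MaxIn (P i) c}

/-- `c` is a plurality winner of `T`. -/
def IsPluralityWinner {C : Type*} {n : ℕ} (T : Fin n → C → C → Prop) (c : C) : Prop :=
  ∀ d, pluralityScore T d ≤ pluralityScore T c

/-- `P i` is a necessary supporter of `A`: every maximal element of `P i` lies in `A`. -/
def NecessarySupporter {C : Type*} {n : ℕ} (P : Fin n → C → C → Prop) (A : Set C)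
    (i : Fin n) : Prop := ∀ c, MaxIn (P i) c → c ∈ A

/-- Any linear order on a finite nonempty type has a greatest element. -/
lemma exists_greatest {C : Type*} [Fintype C] [Nonempty C] {r : C → C → Prop}
    (h : IsLinearOrder C r) : ∃ t, ∀ d, r d t := by
  haveI := h
  suffices h' : ∀ s : Finset C, s.Nonempty → ∃ t ∈ s, ∀ d ∈ s, r d t by
    obtain ⟨t, -, ht⟩ := h' Finset.univ Finset.univ_nonempty
    exact ⟨t, fun d => ht d (Finset.mem_univ d)⟩
  intro s hs
  induction hs using Finset.Nonempty.cons_induction with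
  | singleton a =>
      refine ⟨a, Finset.mem_singleton_self a, ?_⟩
      intro d hd; rw [Finset.mem_singleton] at hd; subst hd; exact refl_of r d
  | cons a s ha hs ih =>
      obtain ⟨t, hts, htop⟩ := ih
      rcases total_of r a t with h1 | h1
      · refine ⟨t, Finset.mem_cons_of_mem hts, ?_⟩
        intro d hd
        rcases Finset.mem_cons.1 hd with rfl | hd
        · exact h1
        · exact htop d hd
      · refine ⟨a, Finset.mem_cons_self a s, ?_⟩
        intro d hd
        rcases Finset.mem_cons.1 hd with rfl | hd
        · exact refl_of r d
        · exact trans_of r (htop d hd) h1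

/-- Szpilrajn extension with a prescribed maximal element on top. -/
lemma exists_linear_ext_top {C : Type*} {P : C → C → Prop} (hP : IsPartialOrder C P)
    {c : C} (hc : MaxIn P c) :
    ∃ T : C → C → Prop, IsLinearOrder C T ∧ (∀ a b, P a b → T a b) ∧ ∀ d, T d c := by
  haveI := hP
  set Q : C → C → Prop := fun a b => P a b ∨ b = c with hQdef
  haveI hQ : IsPartialOrder C Q := by
    refine { refl := fun a => Or.inl (refl_of P a), trans := ?_, antisymm := ?_ }
    · rintro a b d (hab | rfl) (hbd | rfl)
      · exact Or.inl (trans_of P hab hbd)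
      · exact Or.inr rfl
      · exact Or.inr (hc d hbd)
      · exact Or.inr rfl
    · rintro a b (hab | h1) (hba | h2)
      · exact antisymm_of P hab hba
      · subst h2; exact (hc b hab).symm
      · subst h1; exact hc a hba
      · rw [h1, h2]
  obtain ⟨T, hT, hsub⟩ := extend_partialOrder Q
  exact ⟨T, hT, fun a b hab => hsub a b (Or.inl hab), fun d => hsub d c (Or.inr rfl)⟩

/-- with `m_q = max{ m_c : c ∈ C \ A }`, every completion has a plurality
winner in `A` iff there is NO injective function `f` from the necessary supporters of `A`
into `A × {1,…,m_q − 1}` whose first component is maximal in the corresponding partial order. -/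
theorem necessary_intersection_iff_no_matching {C : Type*} [Fintype C] [Nonempty C] {n : ℕ}
    (hn : 1 ≤ n)
    (P : Fin n → C → C → Prop) (hP : ∀ i, IsPartialOrder C (P i))
    (A : Set C) (mq : ℕ)
    (hmq_mem : ∃ c ∉ A, maxCount P c = mq)
    (hmq_ub : ∀ c ∉ A, maxCount P c ≤ mq) :
    (∀ T, IsCompletion P T → ∃ a ∈ A, IsPluralityWinner T a) ↔
    ¬ (∃ f : {i : Fin n // NecessarySupporter P A i} → {a : C // a ∈ A} × Fin (mq - 1),
        Function.Injective f ∧ ∀ i, MaxIn (P i.1) ((f i).1 : C)) := by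
  classical
  constructor
  · rintro hall ⟨f, hfinj, hfmax⟩
    obtain ⟨q, hqA, hqm⟩ := hmq_mem
    -- choose the intended top candidate of each voter
    have hts : ∀ i : Fin n, ∃ c, MaxIn (P i) c ∧
        (∀ h : NecessarySupporter P A i, c = ((f ⟨i, h⟩).1 : C)) ∧
        (MaxIn (P i) q → c = q) ∧
        (¬ NecessarySupporter P A i → c ∉ A) := by
      intro i
      by_cases h : NecessarySupporter P A i
      · exact ⟨((f ⟨i, h⟩).1 : C), hfmax ⟨i, h⟩, fun h' => rfl,
          fun h2 => absurd (h q h2) hqA, fun h' => absurd h h'⟩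
      · by_cases h2 : MaxIn (P i) q
        · exact ⟨q, h2, fun h' => absurd h' h, fun _ => rfl, fun _ => hqA⟩
        · have hex : ∃ c, MaxIn (P i) c ∧ c ∉ A := by
            by_contra hcon
            push_neg at hcon
            exact h fun c hc => hcon c hc
          obtain ⟨c, hc1, hc2⟩ := hex
          exact ⟨c, hc1, fun h' => absurd h' h, fun h2' => absurd h2' h2, fun _ => hc2⟩
    choose t ht1 ht2 ht3 ht4 using hts
    have hTex : ∀ i, ∃ T : C → C → Prop, IsLinearOrder C T ∧ (∀ a b, P i a b → T a b) ∧
        ∀ d, T d (t i) := fun i => exists_linear_ext_top (hP i) (ht1 i)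
    choose T hTlin hText hTtop using hTex
    obtain ⟨a, haA, hwin⟩ := hall T ⟨hTlin, hText⟩
    have htopu : ∀ i c, (∀ d, T i d c) → c = t i := by
      intro i c hc
      haveI := hTlin i
      exact antisymm (hTtop i c) (hc (t i))
    rcases Nat.eq_zero_or_pos mq with hmq0 | hmqpos
    · subst hmq0
      have hNSempty : ∀ i, ¬ NecessarySupporter P A i := by
        intro i h
        have := (f ⟨i, h⟩).2.isLt
        omega
      have hempty : IsEmpty {i : Fin n // ∀ d, T i d a} := by
        refine ⟨fun x => ?_⟩
        have hx := htopu x.1 a x.2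
        exact ht4 x.1 (hNSempty x.1) (hx ▸ haA)
      have hsa : pluralityScore T a = 0 := Nat.card_of_isEmpty
      have h1 : 0 < pluralityScore T (t ⟨0, hn⟩) := by
        haveI : Nonempty {i : Fin n // ∀ d, T i d (t ⟨0, hn⟩)} := ⟨⟨⟨0, hn⟩, hTtop ⟨0, hn⟩⟩⟩
        exact Nat.card_pos
      have h2 := hwin (t ⟨0, hn⟩)
      omega
    · -- q gets at least mq points
      have hmapmem : ∀ x : {i : Fin n // MaxIn (P i) q}, ∀ d, T x.1 d q := by
        intro x d
        have := hTtop x.1 d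
        rwa [ht3 x.1 x.2] at this
      have hq_ge : mq ≤ pluralityScore T q := by
        rw [← hqm]
        exact Nat.card_le_card_of_injective
          (fun x : {i : Fin n // MaxIn (P i) q} =>
            (⟨x.1, hmapmem x⟩ : {i : Fin n // ∀ d, T i d q}))
          (fun x y hxy => Subtype.ext (Subtype.mk_eq_mk.mp hxy))
      -- a gets at most mq - 1 points
      have hNSa : ∀ x : {i : Fin n // ∀ d, T i d a},
          ∃ h : NecessarySupporter P A x.1, ((f ⟨x.1, h⟩).1 : C) = a := by
        intro x
        have hta : a = t x.1 := htopu x.1 a x.2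
        have hNS : NecessarySupporter P A x.1 := by
          by_contra h
          exact ht4 x.1 h (hta ▸ haA)
        exact ⟨hNS, (ht2 x.1 hNS).symm.trans hta.symm⟩
      choose hNS hfa using hNSa
      have ha_le : pluralityScore T a ≤ mq - 1 := by
        have hinj : Function.Injective
            (fun x : {i : Fin n // ∀ d, T i d a} => (f ⟨x.1, hNS x⟩).2) := by
          intro x y hxy
          have h1 : f ⟨x.1, hNS x⟩ = f ⟨y.1, hNS y⟩ := by
            refine Prod.ext_iff.mpr ⟨Subtype.ext ?_, hxy⟩
            rw [hfa x, hfa y]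
          have h2 := hfinj h1
          exact Subtype.ext (Subtype.mk_eq_mk.mp h2)
        have hcard := Nat.card_le_card_of_injective _ hinj
        have h2 : Nat.card (Fin (mq - 1)) = mq - 1 :=
          Nat.card_eq_fintype_card.trans (Fintype.card_fin _)
        exact h2 ▸ hcard
      have h3 := hwin q
      omega
  · intro hno T hT
    by_contra hcon
    push_neg at hcon
    apply hno
    have hTex : ∀ i, ∃ t, ∀ d, T i d t := fun i => exists_greatest (hT.1 i)
    choose t ht using hTex
    have htmax : ∀ i, MaxIn (P i) (t i) := by
      intro i d hd
      haveI := hT.1 i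
      exact antisymm (ht i d) (hT.2 i _ _ hd)
    have htopu : ∀ i c, (∀ d, T i d c) → c = t i := by
      intro i c hc
      haveI := hT.1 i
      exact antisymm (ht i c) (hc (t i))
    obtain ⟨w, -, hw⟩ := Finset.exists_max_image Finset.univ (pluralityScore T)
      Finset.univ_nonempty
    have hwA : w ∉ A := fun h => hcon w h (fun d => hw d (Finset.mem_univ d))
    have hscore_le : ∀ c, pluralityScore T c ≤ maxCount P c := by
      intro c
      have hmem : ∀ x : {i : Fin n // ∀ d, T i d c}, MaxIn (P x.1) c := by
        intro x d hd
        haveI := hT.1 x.1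
        exact antisymm (x.2 d) (hT.2 _ _ _ hd)
      exact Nat.card_le_card_of_injective
        (fun x => (⟨x.1, hmem x⟩ : {i : Fin n // MaxIn (P i) c}))
        (fun x y hxy => Subtype.ext (Subtype.mk_eq_mk.mp hxy))
    have hwscore : pluralityScore T w ≤ mq := le_trans (hscore_le w) (hmq_ub w hwA)
    have hA_lt : ∀ a ∈ A, pluralityScore T a < pluralityScore T w := by
      intro a ha
      have h1 : ¬ IsPluralityWinner T a := hcon a ha
      unfold IsPluralityWinner at h1
      push_neg at h1
      obtain ⟨d, hd⟩ := h1
      exact lt_of_lt_of_le hd (hw d (Finset.mem_univ d))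
    have hscore_eq : ∀ a, pluralityScore T a = Set.ncard {j : Fin n | t j = a} := by
      intro a
      have e : {i : Fin n // ∀ d, T i d a} ≃ {j : Fin n // t j = a} :=
        Equiv.subtypeEquivRight (fun i => ⟨fun h => (htopu i a h).symm, fun h d => h ▸ ht i d⟩)
      exact (Nat.card_congr e).trans (Nat.card_coe_set_eq _)
    have hmem : ∀ x : {i : Fin n // NecessarySupporter P A i}, t x.1 ∈ A :=
      fun x => x.2 (t x.1) (htmax x.1)
    have hlt : ∀ x : {i : Fin n // NecessarySupporter P A i},
        Set.ncard {j : Fin n | j < x.1 ∧ t j = t x.1} < mq - 1 := by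
      intro x
      have h1 : {j : Fin n | j < x.1 ∧ t j = t x.1} ⊂ {j : Fin n | t j = t x.1} := by
        refine (Set.ssubset_iff_of_subset (fun k hk => hk.2)).mpr
          ⟨x.1, rfl, fun hk => absurd hk.1 (lt_irrefl _)⟩
      have h2 := Set.ncard_lt_ncard h1 (Set.toFinite _)
      have h3 := hA_lt (t x.1) (hmem x)
      rw [hscore_eq] at h3
      omega
    refine ⟨fun x => (⟨t x.1, hmem x⟩,
      ⟨Set.ncard {j : Fin n | j < x.1 ∧ t j = t x.1}, hlt x⟩), ?_, ?_⟩
    · intro x y hxy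
      have h1 : t x.1 = t y.1 := congrArg (fun p => (p.1 : C)) hxy
      have h2 : Set.ncard {j : Fin n | j < x.1 ∧ t j = t x.1} =
          Set.ncard {j : Fin n | j < y.1 ∧ t j = t y.1} := congrArg (fun p => (p.2 : ℕ)) hxy
      have key : ∀ u v : Fin n, u < v → t u = t v →
          Set.ncard {j : Fin n | j < u ∧ t j = t u} <
          Set.ncard {j : Fin n | j < v ∧ t j = t v} := by
        intro u v huv htuv
        have hsub : {j : Fin n | j < u ∧ t j = t u} ⊂ {j : Fin n | j < v ∧ t j = t v} := by
          refine (Set.ssubset_iff_of_subset ?_).mpr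
            ⟨u, ⟨huv, htuv⟩, fun hk => absurd hk.1 (lt_irrefl _)⟩
          intro k hk
          exact ⟨lt_trans hk.1 huv, hk.2.trans htuv⟩
        exact Set.ncard_lt_ncard hsub (Set.toFinite _)
      apply Subtype.ext
      rcases lt_trichotomy x.1 y.1 with h | h | h
      · exact absurd h2 (ne_of_lt (key _ _ h h1))
      · exact h
      · exact absurd h2.symm (ne_of_lt (key _ _ h h1.symm))
    · exact fun x => htmax x.1
end

section
/- In the tautology-reduction profile, for every completion T and every literal a, the score of a strictly exceeds the score of the special candidate: s(T,a) > s(T,x₀). -/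
/-- The candidate set `C = {x₀} ∪ {x_i, ¬x_i : 1 ≤ i ≤ ℓ}`:
`none` is the special candidate `x₀`, and `some (i, true)` / `some (i, false)`
are the literals `x_i` / `¬x_i`.  Thus `|C| = m = 2ℓ+1`. -/
abbrev Cand (ℓ : ℕ) := Option (Fin ℓ × Bool)

/-- The 0-based index of candidate `c` in the fixed enumeration `oth i` of the
`m − 2` candidates other than `x_i, ¬x_i` (the list `c₁,…,c_{m−2}`). -/
noncomputable def othIdx {ℓ : ℕ} (oth : Fin ℓ → Fin (2 * ℓ - 1) → Cand ℓ)
    (i : Fin ℓ) (c : Cand ℓ) : ℕ :=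
  if h : ∃ q, oth i q = c then (h.choose : ℕ) else 0

/-- The (1-based) position of candidate `c` in the base linear order
`c^i = (c₁,…,c_{d−1}, x_i, ¬x_i, c_d,…,c_{m−2})`. -/
noncomputable def viBasePos {ℓ : ℕ} (oth : Fin ℓ → Fin (2 * ℓ - 1) → Cand ℓ)
    (d : ℕ) (i : Fin ℓ) (c : Cand ℓ) : ℕ :=
  if c = some (i, true) then d
  else if c = some (i, false) then d + 1
  else if othIdx oth i c + 1 < d then othIdx oth i c + 1 else othIdx oth i c + 3

/-- The (1-based) position of candidate `c` in the linear order of voter `v_i^j`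
(for `j ∈ {1,…,m−3}`): the candidates `c₁,…,c_{m−2}` are shifted cyclically `j`
positions to the left, `x_i` is at position `d` and `¬x_i` at `d+1` when `j` is odd,
and they are swapped when `j` is even. -/
noncomputable def vijPos {ℓ : ℕ} (oth : Fin ℓ → Fin (2 * ℓ - 1) → Cand ℓ)
    (d : ℕ) (i : Fin ℓ) (j : ℕ) (c : Cand ℓ) : ℕ :=
  if c = some (i, true) then (if j % 2 = 1 then d else d + 1)
  else if c = some (i, false) then (if j % 2 = 1 then d + 1 else d)
  else
    let p := (othIdx oth i c + (2 * ℓ - 1) - j) % (2 * ℓ - 1) + 1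
    if p < d then p else p + 2

/-- The (1-based) position of candidate `c` in the linear order of voter `u_j`
(for `j ∈ {1,…,m−1}`): the literals `(c″₁,…,c″_{m−1}) = (x₁,¬x₁,…,x_ℓ,¬x_ℓ)`
shifted cyclically `j` positions to the left, followed by `x₀` at position `m`. -/
def uPos (ℓ : ℕ) (j : ℕ) (c : Cand ℓ) : ℕ :=
  match c with
  | none => 2 * ℓ + 1
  | some (i, b) => ((2 * (i : ℕ) + (if b then 0 else 1)) + 2 * ℓ - j) % (2 * ℓ) + 1

/-- `pos` is (the position function of) a linear order on the `m = 2ℓ+1` candidates: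
it is injective with values in `{1,…,m}`. -/
def IsPosOrder (ℓ : ℕ) (pos : Cand ℓ → ℕ) : Prop :=
  Function.Injective pos ∧ ∀ c, 1 ≤ pos c ∧ pos c ≤ 2 * ℓ + 1

/-- `Tv` is a completion of the tautology-reduction profile: `Tv i` is a linear order
extending the partial order of voter `v_i`, i.e. the order `c^i` with (only) the
comparison between `x_i` and `¬x_i` deleted.  (The orders of the voters `v_i^j` and
`u_j` are already total, so a completion is determined by the `Tv i`.) -/
def IsProfileCompletion {ℓ : ℕ} (oth : Fin ℓ → Fin (2 * ℓ - 1) → Cand ℓ)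
    (d : ℕ) (Tv : Fin ℓ → Cand ℓ → ℕ) : Prop :=
  ∀ i, IsPosOrder ℓ (Tv i) ∧
    ∀ a b, viBasePos oth d i a < viBasePos oth d i b →
      ¬(a = some (i, true) ∧ b = some (i, false)) → Tv i a < Tv i b

/-- The score `s(T,c)` of candidate `c` in the completion given by `Tv`: the sum over all
`n = ℓ(m−2)+(m−1)` voters (the `v_i`, the `v_i^j` for `j ∈ {1,…,m−3}`, and the `u_j` for
`j ∈ {1,…,m−1}`) of `r` applied to the position of `c`. -/
noncomputable def score {ℓ : ℕ} (r : ℕ → ℕ) (oth : Fin ℓ → Fin (2 * ℓ - 1) → Cand ℓ)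
    (d : ℕ) (Tv : Fin ℓ → Cand ℓ → ℕ) (c : Cand ℓ) : ℕ :=
  (∑ i : Fin ℓ, r (Tv i c)) +
  (∑ i : Fin ℓ, ∑ j ∈ Finset.Icc 1 (2 * ℓ - 2), r (vijPos oth d i j c)) +
  (∑ j ∈ Finset.Icc 1 (2 * ℓ), r (uPos ℓ j c))

/-- The completion `Tv` selects the literal `x_i` (if `b = true`) resp. `¬x_i`
(if `b = false`): the completion of voter `v_i` places it above its negation. -/
def Selects {ℓ : ℕ} (Tv : Fin ℓ → Cand ℓ → ℕ) (i : Fin ℓ) (b : Bool) : Prop :=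
  if b then Tv i (some (i, true)) < Tv i (some (i, false))
  else Tv i (some (i, false)) < Tv i (some (i, true))

/-- `c` is a winner of the completion `Tv`: it has maximum score. -/
noncomputable def IsWinner {ℓ : ℕ} (r : ℕ → ℕ) (oth : Fin ℓ → Fin (2 * ℓ - 1) → Cand ℓ)
    (d : ℕ) (Tv : Fin ℓ → Cand ℓ → ℕ) (c : Cand ℓ) : Prop :=
  ∀ c', score r oth d Tv c' ≤ score r oth d Tv c

private lemma card_cand (ℓ : ℕ) : Fintype.card (Cand ℓ) = 2 * ℓ + 1 := by
  simp [Cand]; ring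
private lemma oth_surj {ℓ : ℕ} (oth : Fin ℓ → Fin (2 * ℓ - 1) → Cand ℓ)
    (hoth_inj : ∀ i, Function.Injective (oth i))
    (hoth_ne : ∀ i q, oth i q ≠ some (i, true) ∧ oth i q ≠ some (i, false))
    (i : Fin ℓ) (c : Cand ℓ) (hc1 : c ≠ some (i, true)) (hc2 : c ≠ some (i, false)) :
    ∃ q, oth i q = c := by
  by_contra hno
  push_neg at hno
  have hℓ : 1 ≤ ℓ := i.pos
  have hsub : Finset.univ.image (oth i) ⊆
      (Finset.univ : Finset (Cand ℓ)) \ {some (i, true), some (i, false), c} := by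
    intro a ha
    simp only [Finset.mem_image, Finset.mem_univ, true_and] at ha
    obtain ⟨q, rfl⟩ := ha
    simp only [Finset.mem_sdiff, Finset.mem_univ, Finset.mem_insert, Finset.mem_singleton,
      true_and]
    push_neg
    exact ⟨(hoth_ne i q).1, (hoth_ne i q).2, hno q⟩
  have h1 : (Finset.univ.image (oth i)).card = 2 * ℓ - 1 := by
    rw [Finset.card_image_of_injective _ (hoth_inj i), Finset.card_univ, Fintype.card_fin]
  have h2 : ((Finset.univ : Finset (Cand ℓ)) \ {some (i, true), some (i, false), c}).card
      = 2 * ℓ + 1 - 3 := by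
    rw [Finset.card_sdiff_of_subset (by intro x _; exact Finset.mem_univ x), Finset.card_univ, card_cand]
    congr 1
    rw [show ({some (i, true), some (i, false), c} : Finset (Cand ℓ))
      = insert (some (i, true)) (insert (some (i, false)) {c}) from rfl]
    rw [Finset.card_insert_of_notMem (by simp [hc1.symm, hc2.symm]),
        Finset.card_insert_of_notMem (by simp [hc2.symm]), Finset.card_singleton]
  have := Finset.card_le_card hsub
  omega
private lemma othIdx_lt {ℓ : ℕ} (oth : Fin ℓ → Fin (2 * ℓ - 1) → Cand ℓ)
    (i : Fin ℓ) (c : Cand ℓ) (h : ∃ q, oth i q = c) : othIdx oth i c < 2 * ℓ - 1 := by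
  rw [othIdx, dif_pos h]
  exact (h.choose).isLt
private lemma oth_othIdx {ℓ : ℕ} (oth : Fin ℓ → Fin (2 * ℓ - 1) → Cand ℓ)
    (i : Fin ℓ) (c : Cand ℓ) (h : ∃ q, oth i q = c) :
    oth i ⟨othIdx oth i c, othIdx_lt oth i c h⟩ = c := by
  have : (⟨othIdx oth i c, othIdx_lt oth i c h⟩ : Fin (2 * ℓ - 1)) = h.choose := by
    apply Fin.ext
    simp [othIdx, dif_pos h]
  rw [this]
  exact h.choose_spec
private lemma viBase_x {ℓ : ℕ} (oth : Fin ℓ → Fin (2 * ℓ - 1) → Cand ℓ) (d : ℕ) (i : Fin ℓ) :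
    viBasePos oth d i (some (i, true)) = d := by simp [viBasePos]
private lemma viBase_nx {ℓ : ℕ} (oth : Fin ℓ → Fin (2 * ℓ - 1) → Cand ℓ) (d : ℕ) (i : Fin ℓ) :
    viBasePos oth d i (some (i, false)) = d + 1 := by simp [viBasePos]
private lemma viBase_np {ℓ : ℕ} (oth : Fin ℓ → Fin (2 * ℓ - 1) → Cand ℓ) (d : ℕ)
    (hoth_inj : ∀ i, Function.Injective (oth i))
    (hoth_ne : ∀ i q, oth i q ≠ some (i, true) ∧ oth i q ≠ some (i, false))
    (i : Fin ℓ) (c : Cand ℓ) (hc1 : c ≠ some (i, true)) (hc2 : c ≠ some (i, false)) :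
    viBasePos oth d i c = (if othIdx oth i c + 1 < d then othIdx oth i c + 1
      else othIdx oth i c + 3) ∧ othIdx oth i c < 2 * ℓ - 1 := by
  refine ⟨by rw [viBasePos, if_neg hc1, if_neg hc2], ?_⟩
  exact othIdx_lt oth i c (oth_surj oth hoth_inj hoth_ne i c hc1 hc2)
private lemma viBase_np_ne {ℓ : ℕ} (oth : Fin ℓ → Fin (2 * ℓ - 1) → Cand ℓ) (d : ℕ)
    (hoth_inj : ∀ i, Function.Injective (oth i))
    (hoth_ne : ∀ i q, oth i q ≠ some (i, true) ∧ oth i q ≠ some (i, false))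
    (hd1 : 1 ≤ d)
    (i : Fin ℓ) (c : Cand ℓ) (hc1 : c ≠ some (i, true)) (hc2 : c ≠ some (i, false)) :
    viBasePos oth d i c ≠ d ∧ viBasePos oth d i c ≠ d + 1 ∧
      1 ≤ viBasePos oth d i c ∧ viBasePos oth d i c ≤ 2 * ℓ + 1 := by
  obtain ⟨he, hk⟩ := viBase_np oth d hoth_inj hoth_ne i c hc1 hc2
  have hℓ : 1 ≤ ℓ := i.pos
  rw [he]; split_ifs <;> omega
private lemma cand_tri {ℓ : ℕ} (i : Fin ℓ) (c : Cand ℓ) :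
    c = some (i, true) ∨ c = some (i, false) ∨
      (c ≠ some (i, true) ∧ c ≠ some (i, false)) := by tauto
private lemma viBase_order {ℓ : ℕ} (oth : Fin ℓ → Fin (2 * ℓ - 1) → Cand ℓ) (d : ℕ)
    (hoth_inj : ∀ i, Function.Injective (oth i))
    (hoth_ne : ∀ i q, oth i q ≠ some (i, true) ∧ oth i q ≠ some (i, false))
    (hd1 : 1 ≤ d) (hd2 : d ≤ 2 * ℓ) (i : Fin ℓ) : IsPosOrder ℓ (viBasePos oth d i) := by
  have hℓ : 1 ≤ ℓ := i.pos
  constructor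
  · intro c c' h
    rcases cand_tri i c with rfl | rfl | ⟨h1, h2⟩ <;>
      rcases cand_tri i c' with rfl | rfl | ⟨h1', h2'⟩
    · rfl
    · rw [viBase_x, viBase_nx] at h; omega
    · exfalso
      rw [viBase_x] at h
      exact (viBase_np_ne oth d hoth_inj hoth_ne hd1 i c' h1' h2').1 h.symm
    · rw [viBase_x, viBase_nx] at h; omega
    · rfl
    · exfalso
      rw [viBase_nx] at h
      exact (viBase_np_ne oth d hoth_inj hoth_ne hd1 i c' h1' h2').2.1 h.symm
    · exfalso
      rw [viBase_x] at h
      exact (viBase_np_ne oth d hoth_inj hoth_ne hd1 i c h1 h2).1 h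
    · exfalso
      rw [viBase_nx] at h
      exact (viBase_np_ne oth d hoth_inj hoth_ne hd1 i c h1 h2).2.1 h
    · obtain ⟨he, hk⟩ := viBase_np oth d hoth_inj hoth_ne i c h1 h2
      obtain ⟨he', hk'⟩ := viBase_np oth d hoth_inj hoth_ne i c' h1' h2'
      rw [he, he'] at h
      have hkeq : othIdx oth i c = othIdx oth i c' := by split_ifs at h <;> omega
      have s1 := oth_surj oth hoth_inj hoth_ne i c h1 h2
      have s2 := oth_surj oth hoth_inj hoth_ne i c' h1' h2'
      have e1 := oth_othIdx oth i c s1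
      have e2 := oth_othIdx oth i c' s2
      rw [← e1, ← e2]
      congr 1
      exact Fin.ext hkeq
  · intro c
    rcases cand_tri i c with rfl | rfl | ⟨h1, h2⟩
    · rw [viBase_x]; omega
    · rw [viBase_nx]; omega
    · have := viBase_np_ne oth d hoth_inj hoth_ne hd1 i c h1 h2
      omega
private lemma image_univ_eq {ℓ : ℕ} (f : Cand ℓ → ℕ) (hf : IsPosOrder ℓ f) :
    Finset.univ.image f = Finset.Icc 1 (2 * ℓ + 1) := by
  apply Finset.eq_of_subset_of_card_le
  · intro p hp
    simp only [Finset.mem_image, Finset.mem_univ, true_and] at hp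
    obtain ⟨c, rfl⟩ := hp
    exact Finset.mem_Icc.mpr (hf.2 c)
  · rw [Nat.card_Icc, Finset.card_image_of_injective _ hf.1, Finset.card_univ, card_cand]
    omega
private lemma card_filter_lt {ℓ : ℕ} (f : Cand ℓ → ℕ) (hf : IsPosOrder ℓ f)
    (t : ℕ) (ht : t ≤ 2 * ℓ + 2) :
    (Finset.univ.filter (fun c => f c < t)).card = t - 1 := by
  rw [← Finset.card_image_of_injective _ hf.1]
  have h2 : (Finset.univ.filter (fun c => f c < t)).image f
      = (Finset.Icc 1 (2 * ℓ + 1)).filter (· < t) := by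
    rw [← image_univ_eq f hf]
    exact (Finset.filter_image (p := fun x => x < t)).symm
  rw [h2]
  have h3 : (Finset.Icc 1 (2 * ℓ + 1)).filter (· < t)
      = Finset.Icc 1 (min (2 * ℓ + 1) (t - 1)) := by
    ext x; simp only [Finset.mem_filter, Finset.mem_Icc, min_def]
    split_ifs <;> omega
  rw [h3, Nat.card_Icc]
  omega
private lemma card_filter_gt {ℓ : ℕ} (f : Cand ℓ → ℕ) (hf : IsPosOrder ℓ f)
    (t : ℕ) :
    (Finset.univ.filter (fun c => t < f c)).card = 2 * ℓ + 1 - t := by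
  rw [← Finset.card_image_of_injective _ hf.1]
  have h2 : (Finset.univ.filter (fun c => t < f c)).image f
      = (Finset.Icc 1 (2 * ℓ + 1)).filter (t < ·) := by
    rw [← image_univ_eq f hf]
    exact (Finset.filter_image (p := fun x => t < x)).symm
  rw [h2]
  have h3 : (Finset.Icc 1 (2 * ℓ + 1)).filter (t < ·)
      = Finset.Icc (max 1 (t + 1)) (2 * ℓ + 1) := by
    ext x; simp only [Finset.mem_filter, Finset.mem_Icc, max_def]
    split_ifs <;> omega
  rw [h3, Nat.card_Icc]
  omega
private lemma completion_eq {ℓ : ℕ} (oth : Fin ℓ → Fin (2 * ℓ - 1) → Cand ℓ) (d : ℕ)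
    (hoth_inj : ∀ i, Function.Injective (oth i))
    (hoth_ne : ∀ i q, oth i q ≠ some (i, true) ∧ oth i q ≠ some (i, false))
    (hd1 : 1 ≤ d) (hd2 : d ≤ 2 * ℓ) (i : Fin ℓ) (f : Cand ℓ → ℕ) (hf : IsPosOrder ℓ f)
    (hmono : ∀ a b, viBasePos oth d i a < viBasePos oth d i b →
      ¬(a = some (i, true) ∧ b = some (i, false)) → f a < f b)
    (c : Cand ℓ) (hcd : viBasePos oth d i c ≠ d) (hcd1 : viBasePos oth d i c ≠ d + 1) :
    f c = viBasePos oth d i c := by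
  have hP : IsPosOrder ℓ (viBasePos oth d i) := viBase_order oth d hoth_inj hoth_ne hd1 hd2 i
  have hsub1 : Finset.univ.filter (fun c' => viBasePos oth d i c' < viBasePos oth d i c)
      ⊆ Finset.univ.filter (fun c' => f c' < f c) := by
    intro c' hc'
    simp only [Finset.mem_filter, Finset.mem_univ, true_and] at *
    refine hmono c' c hc' ?_
    rintro ⟨-, rfl⟩
    exact hcd1 (viBase_nx oth d i)
  have hsub2 : Finset.univ.filter (fun c' => viBasePos oth d i c < viBasePos oth d i c')
      ⊆ Finset.univ.filter (fun c' => f c < f c') := by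
    intro c' hc'
    simp only [Finset.mem_filter, Finset.mem_univ, true_and] at *
    refine hmono c c' hc' ?_
    rintro ⟨rfl, -⟩
    exact hcd (viBase_x oth d i)
  have hc1 := Finset.card_le_card hsub1
  have hc2 := Finset.card_le_card hsub2
  rw [card_filter_lt (viBasePos oth d i) hP (viBasePos oth d i c) (by have := hP.2 c; omega),
      card_filter_lt f hf (f c) (by have := hf.2 c; omega)] at hc1
  rw [card_filter_gt (viBasePos oth d i) hP (viBasePos oth d i c),
      card_filter_gt f hf (f c)] at hc2
  have b1 := hP.2 c
  have b2 := hf.2 c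
  omega
private lemma completion_pair {ℓ : ℕ} (oth : Fin ℓ → Fin (2 * ℓ - 1) → Cand ℓ) (d : ℕ)
    (hoth_inj : ∀ i, Function.Injective (oth i))
    (hoth_ne : ∀ i q, oth i q ≠ some (i, true) ∧ oth i q ≠ some (i, false))
    (hd1 : 1 ≤ d) (hd2 : d ≤ 2 * ℓ) (i : Fin ℓ) (f : Cand ℓ → ℕ) (hf : IsPosOrder ℓ f)
    (hmono : ∀ a b, viBasePos oth d i a < viBasePos oth d i b →
      ¬(a = some (i, true) ∧ b = some (i, false)) → f a < f b)
    (b : Bool) :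
    d ≤ f (some (i, b)) ∧ f (some (i, b)) ≤ d + 1 := by
  have hP : IsPosOrder ℓ (viBasePos oth d i) := viBase_order oth d hoth_inj hoth_ne hd1 hd2 i
  have hPa : d ≤ viBasePos oth d i (some (i, b)) ∧ viBasePos oth d i (some (i, b)) ≤ d + 1 := by
    cases b
    · rw [viBase_nx]; omega
    · rw [viBase_x]; omega
  have hsub1 : Finset.univ.filter (fun c' => viBasePos oth d i c' < d)
      ⊆ Finset.univ.filter (fun c' => f c' < f (some (i, b))) := by
    intro c' hc'
    simp only [Finset.mem_filter, Finset.mem_univ, true_and] at *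
    refine hmono c' (some (i, b)) (by omega) ?_
    rintro ⟨rfl, -⟩
    rw [viBase_x] at hc'; omega
  have hsub2 : Finset.univ.filter (fun c' => d + 1 < viBasePos oth d i c')
      ⊆ Finset.univ.filter (fun c' => f (some (i, b)) < f c') := by
    intro c' hc'
    simp only [Finset.mem_filter, Finset.mem_univ, true_and] at *
    refine hmono (some (i, b)) c' (by omega) ?_
    rintro ⟨-, rfl⟩
    rw [viBase_nx] at hc'; omega
  have hc1 := Finset.card_le_card hsub1
  have hc2 := Finset.card_le_card hsub2
  rw [card_filter_lt (viBasePos oth d i) hP d (by omega),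
      card_filter_lt f hf (f (some (i, b))) (by have := hf.2 (some (i, b)); omega)] at hc1
  rw [card_filter_gt (viBasePos oth d i) hP (d + 1),
      card_filter_gt f hf (f (some (i, b)))] at hc2
  have b2 := hf.2 (some (i, b))
  omega
private lemma mod_if (M k j : ℕ) (hk : k < M) (hj : j < M) :
    (k + M - j) % M = if j ≤ k then k - j else k + M - j := by
  split_ifs with h
  · have : k + M - j = (k - j) + M := by omega
    rw [this, Nat.add_mod_right, Nat.mod_eq_of_lt (by omega)]
  · exact Nat.mod_eq_of_lt (by omega)
private lemma sum_shift (M k : ℕ) (hM : 0 < M) (hk : k < M) (g : ℕ → ℕ) :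
    ∑ j ∈ Finset.range M, g ((k + M - j) % M) = ∑ v ∈ Finset.range M, g v := by
  have hrw : ∀ j ∈ Finset.range M, g ((k + M - j) % M)
      = g (if j ≤ k then k - j else k + M - j) := by
    intro j hj
    rw [mod_if M k j hk (Finset.mem_range.mp hj)]
  rw [Finset.sum_congr rfl hrw]
  refine Finset.sum_nbij' (fun j => if j ≤ k then k - j else k + M - j)
    (fun v => if v ≤ k then k - v else k + M - v) ?_ ?_ ?_ ?_ ?_
  · intro a ha; simp only [Finset.mem_range] at *; split_ifs <;> omega
  · intro a ha; simp only [Finset.mem_range] at *; split_ifs <;> omega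
  · intro a ha; simp only [Finset.mem_range] at *; split_ifs <;> omega
  · intro a ha; simp only [Finset.mem_range] at *; split_ifs <;> omega
  · intro a _; rfl
private lemma parity_sum (A B : ℕ) : ∀ k : ℕ,
    ∑ j ∈ Finset.Icc 1 (2 * k), (if j % 2 = 1 then A else B) = k * (A + B) := by
  intro k
  induction k with
  | zero => simp
  | succ n ih =>
    have h1 : Finset.Icc 1 (2 * (n + 1)) =
        insert (2 * n + 1) (insert (2 * n + 2) (Finset.Icc 1 (2 * n))) := by
      ext x; simp only [Finset.mem_Icc, Finset.mem_insert]; omega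
    rw [h1, Finset.sum_insert (by simp only [Finset.mem_insert, Finset.mem_Icc]; omega),
        Finset.sum_insert (by simp only [Finset.mem_Icc]; omega), ih]
    have e1 : (2 * n + 1) % 2 = 1 := by omega
    have e2 : (2 * n + 2) % 2 = 0 := by omega
    rw [e1, e2]
    simp; ring
private lemma group_sum {ℓ : ℕ} (oth : Fin ℓ → Fin (2 * ℓ - 1) → Cand ℓ) (d : ℕ)
    (hoth_inj : ∀ i, Function.Injective (oth i))
    (hoth_ne : ∀ i q, oth i q ≠ some (i, true) ∧ oth i q ≠ some (i, false))
    (hd1 : 1 ≤ d) (hd2 : d ≤ 2 * ℓ) (r : ℕ → ℕ)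
    (i : Fin ℓ) (c : Cand ℓ) (hc1 : c ≠ some (i, true)) (hc2 : c ≠ some (i, false)) :
    r (viBasePos oth d i c) + (∑ j ∈ Finset.Icc 1 (2 * ℓ - 2), r (vijPos oth d i j c))
      + (r d + r (d + 1)) = ∑ p ∈ Finset.Icc 1 (2 * ℓ + 1), r p := by
  have hℓ : 1 ≤ ℓ := i.pos
  obtain ⟨hPe, hk⟩ := viBase_np oth d hoth_inj hoth_ne i c hc1 hc2
  have hMpos : 0 < 2 * ℓ - 1 := by omega
  have hterm : ∀ j : ℕ, r (vijPos oth d i j c)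
      = (fun v => r (if v + 1 < d then v + 1 else v + 3))
          ((othIdx oth i c + (2 * ℓ - 1) - j) % (2 * ℓ - 1)) := by
    intro j
    rw [vijPos, if_neg hc1, if_neg hc2]
  have h0 : (othIdx oth i c + (2 * ℓ - 1) - 0) % (2 * ℓ - 1) = othIdx oth i c := by
    rw [Nat.sub_zero, Nat.add_mod_right, Nat.mod_eq_of_lt (by omega)]
  have hins : Finset.range (2 * ℓ - 1) = insert 0 (Finset.Icc 1 (2 * ℓ - 2)) := by
    ext x; simp only [Finset.mem_range, Finset.mem_insert, Finset.mem_Icc]; omega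
  have hsum1 : r (viBasePos oth d i c) + (∑ j ∈ Finset.Icc 1 (2 * ℓ - 2), r (vijPos oth d i j c))
      = ∑ j ∈ Finset.range (2 * ℓ - 1),
          (fun v => r (if v + 1 < d then v + 1 else v + 3))
            ((othIdx oth i c + (2 * ℓ - 1) - j) % (2 * ℓ - 1)) := by
    rw [hins, Finset.sum_insert (by simp)]
    congr 1
    · rw [hPe, h0]
    · exact Finset.sum_congr rfl fun j _ => hterm j
  rw [hsum1, sum_shift (2 * ℓ - 1) (othIdx oth i c) hMpos (by omega)
    (fun v => r (if v + 1 < d then v + 1 else v + 3))]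
  have hbij : ∑ v ∈ Finset.range (2 * ℓ - 1), (fun v => r (if v + 1 < d then v + 1 else v + 3)) v
      = ∑ p ∈ ((Finset.Icc 1 (2 * ℓ + 1)).erase (d + 1)).erase d, r p := by
    refine Finset.sum_nbij' (fun v => if v + 1 < d then v + 1 else v + 3)
      (fun p => if p < d then p - 1 else p - 3) ?_ ?_ ?_ ?_ ?_
    · intro a ha
      simp only [Finset.mem_range] at ha
      simp only [Finset.mem_erase, Finset.mem_Icc]
      split_ifs <;> omega
    · intro a ha
      simp only [Finset.mem_erase, Finset.mem_Icc] at ha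
      simp only [Finset.mem_range]
      split_ifs <;> omega
    · intro a ha
      simp only [Finset.mem_range] at ha
      split_ifs <;> omega
    · intro a ha
      simp only [Finset.mem_erase, Finset.mem_Icc] at ha
      split_ifs <;> omega
    · intro a _; rfl
  rw [hbij, ← add_assoc]
  have hmem1 : d ∈ (Finset.Icc 1 (2 * ℓ + 1)).erase (d + 1) := by
    simp only [Finset.mem_erase, Finset.mem_Icc]; omega
  have hmem2 : d + 1 ∈ Finset.Icc 1 (2 * ℓ + 1) := by
    simp only [Finset.mem_Icc]; omega
  rw [Finset.sum_erase_add _ _ hmem1, Finset.sum_erase_add _ _ hmem2]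
private lemma pair_vij_sum {ℓ : ℕ} (oth : Fin ℓ → Fin (2 * ℓ - 1) → Cand ℓ) (d : ℕ)
    (r : ℕ → ℕ) (i : Fin ℓ) (b : Bool) :
    ∑ j ∈ Finset.Icc 1 (2 * ℓ - 2), r (vijPos oth d i j (some (i, b)))
      = (ℓ - 1) * (r d + r (d + 1)) := by
  have hℓ : 1 ≤ ℓ := i.pos
  have h2 : 2 * ℓ - 2 = 2 * (ℓ - 1) := by omega
  cases b
  · have hterm : ∀ j ∈ Finset.Icc 1 (2 * ℓ - 2), r (vijPos oth d i j (some (i, false)))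
        = (if j % 2 = 1 then r (d + 1) else r d) := by
      intro j _
      rw [vijPos, if_neg (by simp), if_pos rfl]
      split_ifs <;> rfl
    rw [Finset.sum_congr rfl hterm, h2, parity_sum]
    ring
  · have hterm : ∀ j ∈ Finset.Icc 1 (2 * ℓ - 2), r (vijPos oth d i j (some (i, true)))
        = (if j % 2 = 1 then r d else r (d + 1)) := by
      intro j _
      rw [vijPos, if_pos rfl]
      split_ifs <;> rfl
    rw [Finset.sum_congr rfl hterm, h2, parity_sum]
private lemma usum_none (ℓ : ℕ) (r : ℕ → ℕ) :
    ∑ j ∈ Finset.Icc 1 (2 * ℓ), r (uPos ℓ j none) = 2 * ℓ * r (2 * ℓ + 1) := by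
  have : ∀ j ∈ Finset.Icc 1 (2 * ℓ), r (uPos ℓ j none) = r (2 * ℓ + 1) := by
    intro j _; rfl
  rw [Finset.sum_congr rfl this, Finset.sum_const, Nat.card_Icc, smul_eq_mul]
  norm_num
private lemma usum_lit {ℓ : ℕ} (hℓ : 1 ≤ ℓ) (r : ℕ → ℕ) (i : Fin ℓ) (b : Bool) :
    ∑ j ∈ Finset.Icc 1 (2 * ℓ), r (uPos ℓ j (some (i, b)))
      = ∑ p ∈ Finset.Icc 1 (2 * ℓ), r p := by
  have hk2 : 2 * (i : ℕ) + (if b then 0 else 1) < 2 * ℓ := by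
    have := i.isLt; cases b <;> simp <;> omega
  set k2 := 2 * (i : ℕ) + (if b then 0 else 1) with hk2def
  have hterm : ∀ j : ℕ, uPos ℓ j (some (i, b)) = (k2 + 2 * ℓ - j) % (2 * ℓ) + 1 := by
    intro j; rfl
  have hk3 : (if k2 = 0 then 2 * ℓ - 1 else k2 - 1) < 2 * ℓ := by
    split_ifs <;> omega
  have stepA : ∑ j ∈ Finset.Icc 1 (2 * ℓ), r (uPos ℓ j (some (i, b)))
      = ∑ v ∈ Finset.range (2 * ℓ),
          (fun w => r (w + 1))
            (((if k2 = 0 then 2 * ℓ - 1 else k2 - 1) + 2 * ℓ - v) % (2 * ℓ)) := by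
    refine Finset.sum_nbij' (fun j => j - 1) (fun v => v + 1) ?_ ?_ ?_ ?_ ?_
    · intro a ha; simp only [Finset.mem_Icc] at ha; simp only [Finset.mem_range]; omega
    · intro a ha; simp only [Finset.mem_range] at ha; simp only [Finset.mem_Icc]; omega
    · intro a ha; simp only [Finset.mem_Icc] at ha; omega
    · intro a ha; simp only [Finset.mem_range] at ha; omega
    · intro a ha
      simp only [Finset.mem_Icc] at ha
      rw [hterm a]
      simp only []
      congr 1
      by_cases h0 : k2 = 0
      · rw [if_pos h0]
        have he : (2 * ℓ - 1) + 2 * ℓ - (a - 1) = (k2 + 2 * ℓ - a) + 2 * ℓ := by omega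
        rw [he, Nat.add_mod_right]
      · rw [if_neg h0]
        have he2 : k2 - 1 + 2 * ℓ - (a - 1) = k2 + 2 * ℓ - a := by omega
        rw [he2]
  rw [stepA, sum_shift (2 * ℓ) (if k2 = 0 then 2 * ℓ - 1 else k2 - 1) (by omega) hk3
      (fun w => r (w + 1))]
  refine Finset.sum_nbij' (fun v => v + 1) (fun p => p - 1) ?_ ?_ ?_ ?_ ?_
  · intro a ha; simp only [Finset.mem_range] at ha; simp only [Finset.mem_Icc]; omega
  · intro a ha; simp only [Finset.mem_Icc] at ha; simp only [Finset.mem_range]; omega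
  · intro a ha; simp only [Finset.mem_range] at ha; omega
  · intro a ha; simp only [Finset.mem_Icc] at ha; omega
  · intro a _; rfl

/-- in the tautology-reduction profile, for every completion `T` and every
literal `a`, the score of `a` strictly exceeds the score of the special candidate `x₀`. -/
theorem score_literal_gt_special (ℓ : ℕ) (hℓ : 1 ≤ ℓ) (r : ℕ → ℕ)
    (hr_mono : ∀ p q, 1 ≤ p → p ≤ q → q ≤ 2 * ℓ + 1 → r q ≤ r p)
    (hr_strict : r (2 * ℓ + 1) < r 1)
    (d : ℕ) (hd1 : 1 ≤ d) (hd2 : d ≤ 2 * ℓ) (hrd : r (d + 1) < r d)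
    (oth : Fin ℓ → Fin (2 * ℓ - 1) → Cand ℓ)
    (hoth_inj : ∀ i, Function.Injective (oth i))
    (hoth_ne : ∀ i q, oth i q ≠ some (i, true) ∧ oth i q ≠ some (i, false))
    (Tv : Fin ℓ → Cand ℓ → ℕ) (hTv : IsProfileCompletion oth d Tv)
    (i : Fin ℓ) (b : Bool) :
    score r oth d Tv none < score r oth d Tv (some (i, b)) := by
  have hsub : ∀ x : ℕ, (ℓ - 1) * x + x = ℓ * x := by
    intro x
    have h : ℓ - 1 + 1 = ℓ := by omega
    calc (ℓ - 1) * x + x = ((ℓ - 1) + 1) * x := by ring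
    _ = ℓ * x := by rw [h]
  have hSS : ∑ p ∈ Finset.Icc 1 (2 * ℓ + 1), r p
      = (∑ p ∈ Finset.Icc 1 (2 * ℓ), r p) + r (2 * ℓ + 1) :=
    Finset.sum_Icc_succ_top (a := 1) (b := 2 * ℓ) (by omega) r
  -- none brackets
  have hbr_none : ∀ i' : Fin ℓ,
      r (Tv i' none) + (∑ j ∈ Finset.Icc 1 (2 * ℓ - 2), r (vijPos oth d i' j none))
        + (r d + r (d + 1)) = ∑ p ∈ Finset.Icc 1 (2 * ℓ + 1), r p := by
    intro i'
    have h1 : (none : Cand ℓ) ≠ some (i', true) := by simp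
    have h2 : (none : Cand ℓ) ≠ some (i', false) := by simp
    have hne := viBase_np_ne oth d hoth_inj hoth_ne hd1 i' none h1 h2
    have heq : Tv i' none = viBasePos oth d i' none :=
      completion_eq oth d hoth_inj hoth_ne hd1 hd2 i' (Tv i') (hTv i').1 (hTv i').2
        none hne.1 hne.2.1
    rw [heq]
    exact group_sum oth d hoth_inj hoth_ne hd1 hd2 r i' none h1 h2
  -- literal brackets for groups i' ≠ i
  have hbr_lit : ∀ i' ∈ Finset.univ.erase i,
      r (Tv i' (some (i, b))) +
        (∑ j ∈ Finset.Icc 1 (2 * ℓ - 2), r (vijPos oth d i' j (some (i, b))))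
        + (r d + r (d + 1)) = ∑ p ∈ Finset.Icc 1 (2 * ℓ + 1), r p := by
    intro i' hi'
    have hii' : i' ≠ i := (Finset.mem_erase.mp hi').1
    have h1 : (some (i, b) : Cand ℓ) ≠ some (i', true) := by
      intro h
      simp only [Option.some.injEq, Prod.mk.injEq] at h
      exact hii' h.1.symm
    have h2 : (some (i, b) : Cand ℓ) ≠ some (i', false) := by
      intro h
      simp only [Option.some.injEq, Prod.mk.injEq] at h
      exact hii' h.1.symm
    have hne := viBase_np_ne oth d hoth_inj hoth_ne hd1 i' _ h1 h2
    have heq : Tv i' (some (i, b)) = viBasePos oth d i' (some (i, b)) :=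
      completion_eq oth d hoth_inj hoth_ne hd1 hd2 i' (Tv i') (hTv i').1 (hTv i').2
        _ hne.1 hne.2.1
    rw [heq]
    exact group_sum oth d hoth_inj hoth_ne hd1 hd2 r i' _ h1 h2
  -- summed none equation
  have h1 : (∑ i' : Fin ℓ, r (Tv i' none)) +
      (∑ i' : Fin ℓ, ∑ j ∈ Finset.Icc 1 (2 * ℓ - 2), r (vijPos oth d i' j none)) +
      ℓ * (r d + r (d + 1)) = ℓ * ∑ p ∈ Finset.Icc 1 (2 * ℓ + 1), r p := by
    have := Finset.sum_congr rfl (fun i' (_ : i' ∈ (Finset.univ : Finset (Fin ℓ))) =>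
      hbr_none i')
    rw [Finset.sum_add_distrib, Finset.sum_add_distrib, Finset.sum_const, Finset.sum_const,
      Finset.card_univ, Fintype.card_fin, smul_eq_mul, smul_eq_mul] at this
    exact this
  -- summed literal equation over erase
  have h2 : (∑ i' ∈ Finset.univ.erase i, r (Tv i' (some (i, b)))) +
      (∑ i' ∈ Finset.univ.erase i,
        ∑ j ∈ Finset.Icc 1 (2 * ℓ - 2), r (vijPos oth d i' j (some (i, b)))) +
      (ℓ - 1) * (r d + r (d + 1)) = (ℓ - 1) * ∑ p ∈ Finset.Icc 1 (2 * ℓ + 1), r p := by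
    have := Finset.sum_congr rfl hbr_lit
    rw [Finset.sum_add_distrib, Finset.sum_add_distrib, Finset.sum_const, Finset.sum_const,
      Finset.card_erase_of_mem (Finset.mem_univ i), Finset.card_univ, Fintype.card_fin,
      smul_eq_mul, smul_eq_mul] at this
    exact this
  -- split literal sums at i
  have hsplitX : (∑ i' : Fin ℓ, r (Tv i' (some (i, b))))
      = (∑ i' ∈ Finset.univ.erase i, r (Tv i' (some (i, b)))) + r (Tv i (some (i, b))) :=
    (Finset.sum_erase_add _ _ (Finset.mem_univ i)).symm
  have hsplitY : (∑ i' : Fin ℓ, ∑ j ∈ Finset.Icc 1 (2 * ℓ - 2), r (vijPos oth d i' j (some (i, b))))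
      = (∑ i' ∈ Finset.univ.erase i,
          ∑ j ∈ Finset.Icc 1 (2 * ℓ - 2), r (vijPos oth d i' j (some (i, b)))) +
        ∑ j ∈ Finset.Icc 1 (2 * ℓ - 2), r (vijPos oth d i j (some (i, b))) :=
    (Finset.sum_erase_add _ _ (Finset.mem_univ i)).symm
  have hpair : ∑ j ∈ Finset.Icc 1 (2 * ℓ - 2), r (vijPos oth d i j (some (i, b)))
      = (ℓ - 1) * (r d + r (d + 1)) := pair_vij_sum oth d r i b
  -- bound on Tv i at the pair
  have hTvb : r (d + 1) ≤ r (Tv i (some (i, b))) := by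
    have hcp := completion_pair oth d hoth_inj hoth_ne hd1 hd2 i (Tv i) (hTv i).1 (hTv i).2 b
    have hge1 := ((hTv i).1.2 (some (i, b))).1
    exact hr_mono (Tv i (some (i, b))) (d + 1) (by omega) (by omega) (by omega)
  -- u sums
  have hu_none := usum_none ℓ r
  have hu_lit := usum_lit (ℓ := ℓ) hℓ r i b
  -- basic r inequalities
  have hfg : r (2 * ℓ + 1) ≤ r (d + 1) :=
    hr_mono (d + 1) (2 * ℓ + 1) (by omega) (by omega) (by omega)
  have hef : r (d + 1) + 1 ≤ r d := hrd
  -- product facts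
  have m1 : (ℓ - 1) * r d + r d = ℓ * r d := hsub (r d)
  have m2 : (ℓ - 1) * r (d + 1) + r (d + 1) = ℓ * r (d + 1) := hsub (r (d + 1))
  have m3 : (ℓ - 1) * (∑ p ∈ Finset.Icc 1 (2 * ℓ + 1), r p) + (∑ p ∈ Finset.Icc 1 (2 * ℓ + 1), r p)
      = ℓ * ∑ p ∈ Finset.Icc 1 (2 * ℓ + 1), r p := hsub _
  have m4 : (ℓ - 1) * r (2 * ℓ + 1) + r (2 * ℓ + 1) = ℓ * r (2 * ℓ + 1) := hsub _
  have m5 : (ℓ - 1) * (r (d + 1) + 1) ≤ (ℓ - 1) * r d := Nat.mul_le_mul_left (ℓ - 1) hef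
  have m5' : (ℓ - 1) * (r (d + 1) + 1) = (ℓ - 1) * r (d + 1) + (ℓ - 1) := by ring
  have m6 : (ℓ - 1) * r (2 * ℓ + 1) ≤ (ℓ - 1) * r (d + 1) := Nat.mul_le_mul_left (ℓ - 1) hfg
  -- assemble
  rw [score, score, hu_none, hu_lit, hsplitX, hsplitY, hpair]
  linarith [h1, h2, hTvb, hSS, m1, m2, m3, m4, m5, m5', m6]
end
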